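/- Under the stated cell-problem orthogonality hypotheses, the effective viscosity tensor satisfies the Legendre–Hadamard (strong ellipticity) condition: there exists λ > 0 such that for all ζ, η ∈ ℝ^d, Σ_{i,j,m,n} N^{ij}_{mn} ζ_i ζ_m η_j η_n ≥ λ |ζ|² |η|². -/

import Mathlib

open MeasureTheory Finset

noncomputable section

/-- The symmetrized gradient `D(v) = (∇v + ∇vᵀ)/2` of a vector field `v : ℝ^d → ℝ^d`. -/
def symGrad {d : ℕ} (v : EuclideanSpace ℝ (Fin d) → EuclideanSpace ℝ (Fin d))
    (y : EuclideanSpace ℝ (Fin d)) : Matrix (Fin d) (Fin d) ℝ :=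
  fun m n =>
    (fderiv ℝ v y (EuclideanSpace.single m 1) n + fderiv ℝ v y (EuclideanSpace.single n 1) m) / 2

/-- The Frobenius inner product `A : B` of two `d × d` matrices. -/
def frob {d : ℕ} (A B : Matrix (Fin d) (Fin d) ℝ) : ℝ := ∑ m, ∑ n, A m n * B m n

/-- The field `P^{ij}` given by `(P^{ij}(y))_k = y_j δ_{ik}`. -/
def Pfield {d : ℕ} (i j : Fin d) (y : EuclideanSpace ℝ (Fin d)) : EuclideanSpace ℝ (Fin d) :=
  EuclideanSpace.single i (y j)

/-!
With `M := Σ ζ_i η_j D(P^{ij} − χ^{ij})` and `u := Σ ζ_i η_j χ^{ij}` we have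
`M = sym(ζ ⊗ η) − D(u)`, and the orthogonality relations turn the biquadratic form into
`∫_Y M : M ≥ 0`. If it vanished for nonzero `ζ, η`, then `M = 0` on `Y`, so the periodic field `u`
would have the constant symmetrized gradient `sym(ζ ⊗ η) ≠ 0` on the closed cell. But `u` takes
the same value at `0` and at `e = e_a` or `e = e_a + e_b`, so by Rolle's theorem `eᵀ D(u) e`
vanishes somewhere on the segment `[0, e]`, and these test vectors force `sym(ζ ⊗ η) = 0`.
Compactness of the product of unit spheres and homogeneity turn positivity into a uniform bound.
-/

variable {d : ℕ}

def unitCell (d : ℕ) : Set (EuclideanSpace ℝ (Fin d)) := {y | ∀ i, y i ∈ Set.Ioo 0 1}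

lemma closure_unitCell_eq_preimage :
    closure (unitCell d) = EuclideanSpace.equiv (Fin d) ℝ ⁻¹' Set.univ.pi fun _ => Set.Icc 0 1 := by
  have h : unitCell d = EuclideanSpace.equiv (Fin d) ℝ ⁻¹' Set.univ.pi fun _ => Set.Ioo 0 1 := by
    ext y; simp [unitCell]
  rw [h, ← ContinuousLinearEquiv.preimage_closure, closure_pi_set, closure_Ioo zero_ne_one]

lemma isOpen_unitCell : IsOpen (unitCell d) := by
  simp only [unitCell, Set.ofPred_forall]
  exact isOpen_iInter_of_finite fun i => isOpen_Ioo.preimage (EuclideanSpace.proj i).continuous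

lemma closure_unitCell : closure (unitCell d) = {y | ∀ i, y i ∈ Set.Icc 0 1} := by
  rw [closure_unitCell_eq_preimage]; ext y; simp only [Set.mem_preimage, Set.mem_univ_pi]; rfl

lemma isCompact_closure_unitCell : IsCompact (closure (unitCell d)) := by
  rw [closure_unitCell_eq_preimage]
  exact (EuclideanSpace.equiv (Fin d) ℝ).toHomeomorph.isCompact_preimage.2
    (isCompact_univ_pi fun _ => isCompact_Icc)

lemma integrableOn_unitCell {f : EuclideanSpace ℝ (Fin d) → ℝ} (hf : Continuous f) :
    IntegrableOn f (unitCell d) :=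
  (hf.continuousOn.integrableOn_compact isCompact_closure_unitCell).mono_set subset_closure

lemma isSymm_symGrad (v : EuclideanSpace ℝ (Fin d) → EuclideanSpace ℝ (Fin d))
    (y : EuclideanSpace ℝ (Fin d)) : (symGrad v y).IsSymm :=
  Matrix.IsSymm.ext fun m n => by simp only [symGrad, add_comm]

lemma continuous_symGrad {v : EuclideanSpace ℝ (Fin d) → EuclideanSpace ℝ (Fin d)}
    (hv : ContDiff ℝ 1 v) : Continuous (symGrad v) := by
  have hv' := hv.continuous_fderiv one_ne_zero
  unfold symGrad
  fun_prop

lemma symGrad_sub {v w : EuclideanSpace ℝ (Fin d) → EuclideanSpace ℝ (Fin d)}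
    {y : EuclideanSpace ℝ (Fin d)} (hv : DifferentiableAt ℝ v y) (hw : DifferentiableAt ℝ w y) :
    symGrad (fun z => v z - w z) y = symGrad v y - symGrad w y := by
  ext m n
  simp only [symGrad, fderiv_fun_sub hv hw, sub_apply, PiLp.sub_apply, Matrix.sub_apply]
  ring

lemma symGrad_sum_smul {ι : Type*} (s : Finset ι) (c : ι → ℝ)
    {w : ι → EuclideanSpace ℝ (Fin d) → EuclideanSpace ℝ (Fin d)} {y : EuclideanSpace ℝ (Fin d)}
    (hw : ∀ p ∈ s, DifferentiableAt ℝ (w p) y) :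
    symGrad (fun z => ∑ p ∈ s, c p • w p z) y = ∑ p ∈ s, c p • symGrad (w p) y := by
  have hderiv :
      fderiv ℝ (fun z => ∑ p ∈ s, c p • w p z) y = ∑ p ∈ s, c p • fderiv ℝ (w p) y :=
    (HasFDerivAt.fun_sum fun p hp => (hw p hp).hasFDerivAt.const_smul (c p)).fderiv
  ext m n
  simp only [symGrad, hderiv, FunLike.coe_sum, FunLike.coe_smul,
    Finset.sum_apply, Pi.smul_apply, WithLp.ofLp_sum, PiLp.smul_apply, Matrix.sum_apply,
    Matrix.smul_apply, smul_eq_mul, ← Finset.sum_add_distrib, Finset.sum_div]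
  exact Finset.sum_congr rfl fun p _ => by ring

lemma Pfield_eq_smulRight (i j : Fin d) :
    Pfield i j = (EuclideanSpace.proj j).smulRight (EuclideanSpace.single i (1 : ℝ)) := by
  ext y k; simp [Pfield, PiLp.single_apply]

lemma symGrad_Pfield_apply (i j : Fin d) (y : EuclideanSpace ℝ (Fin d)) (m n : Fin d) :
    symGrad (Pfield i j) y m n
      = ((if m = j ∧ n = i then 1 else 0) + (if n = j ∧ m = i then 1 else 0)) / 2 := by
  simp only [symGrad, Pfield_eq_smulRight, ContinuousLinearMap.fderiv]
  simp [PiLp.single_apply, ite_and, eq_comm, apply_ite WithLp.ofLp, ite_apply, Pi.single_apply]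

lemma frob_symGrad_Pfield {A : Matrix (Fin d) (Fin d) ℝ} (hA : A.IsSymm) (i j : Fin d)
    (y : EuclideanSpace ℝ (Fin d)) : frob A (symGrad (Pfield i j) y) = A i j := by
  simp only [frob, symGrad_Pfield_apply, ite_and, add_div, ite_div, one_div, zero_div, mul_add,
    mul_ite, mul_zero, sum_add_distrib, sum_ite_irrel, sum_ite_eq', mem_univ, ↓reduceIte,
    sum_const_zero]
  rw [hA.apply i j]; ring

lemma sum_smul_symGrad_Pfield (ζ η : EuclideanSpace ℝ (Fin d)) (y : EuclideanSpace ℝ (Fin d)) :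
    ∑ p : Fin d × Fin d, (ζ p.1 * η p.2) • symGrad (Pfield p.1 p.2) y
      = Matrix.of fun m n => (ζ m * η n + ζ n * η m) / 2 := by
  ext m n
  simp only [Matrix.sum_apply, Matrix.smul_apply, symGrad_Pfield_apply, ite_and, add_div, ite_div,
    one_div, zero_div, smul_eq_mul, mul_add, mul_ite, mul_zero, sum_add_distrib,
    Fintype.sum_prod_type, sum_ite_eq, mem_univ, ↓reduceIte, Matrix.of_apply]
  ring

lemma symOuter_ne_zero {ζ η : EuclideanSpace ℝ (Fin d)} (hζ : ζ ≠ 0) (hη : η ≠ 0) :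
    (Matrix.of fun m n => (ζ m * η n + ζ n * η m) / 2) ≠ 0 := by
  obtain ⟨m, hm⟩ : ∃ m, ζ m ≠ 0 := by
    by_contra! h; exact hζ (by ext m; simp [h m])
  obtain ⟨n, hn⟩ : ∃ n, η n ≠ 0 := by
    by_contra! h; exact hη (by ext n; simp [h n])
  intro h0
  have h : ∀ a b, ζ a * η b + ζ b * η a = 0 := fun a b => by
    simpa using congrFun (congrFun h0 a) b
  have hmm := h m m; have hnn := h n n; have hmn := h m n
  have : (ζ m * η n) ^ 2 = 0 := by linear_combination (ζ m * η n) * hmn - (ζ n * η n) / 2 * hmm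
  exact mul_ne_zero hm hn (pow_eq_zero_iff two_ne_zero |>.1 this)

@[fun_prop]
lemma Continuous.frob {X : Type*} [TopologicalSpace X] {f g : X → Matrix (Fin d) (Fin d) ℝ}
    (hf : Continuous f) (hg : Continuous g) : Continuous fun x => frob (f x) (g x) := by
  unfold _root_.frob; fun_prop

lemma frob_add_right (A B C : Matrix (Fin d) (Fin d) ℝ) :
    frob A (B + C) = frob A B + frob A C := by
  simp only [frob, Matrix.add_apply, mul_add, Finset.sum_add_distrib]

lemma frob_comm (A B : Matrix (Fin d) (Fin d) ℝ) : frob A B = frob B A := by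
  simp only [frob, mul_comm]

lemma frob_sum_smul_left {ι : Type*} (s : Finset ι) (c : ι → ℝ)
    (A : ι → Matrix (Fin d) (Fin d) ℝ) (B : Matrix (Fin d) (Fin d) ℝ) :
    frob (∑ p ∈ s, c p • A p) B = ∑ p ∈ s, c p * frob (A p) B := by
  simp only [frob, Matrix.sum_apply, Matrix.smul_apply, smul_eq_mul, Finset.sum_mul,
    Finset.mul_sum, mul_assoc]
  conv_rhs => rw [Finset.sum_comm]
  exact Finset.sum_congr rfl fun _ _ => Finset.sum_comm

lemma frob_sum_smul {ι : Type*} (s : Finset ι) (c : ι → ℝ) (A : ι → Matrix (Fin d) (Fin d) ℝ) :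
    frob (∑ p ∈ s, c p • A p) (∑ r ∈ s, c r • A r)
      = ∑ p ∈ s, ∑ r ∈ s, c p * c r * frob (A p) (A r) := by
  simp only [frob_sum_smul_left]
  refine Finset.sum_congr rfl fun p _ => ?_
  rw [frob_comm, frob_sum_smul_left, Finset.mul_sum]
  exact Finset.sum_congr rfl fun r _ => by rw [frob_comm]; ring

lemma frob_self_nonneg (A : Matrix (Fin d) (Fin d) ℝ) : 0 ≤ frob A A :=
  Finset.sum_nonneg fun _ _ => Finset.sum_nonneg fun _ _ => mul_self_nonneg _

lemma frob_self_eq_zero {A : Matrix (Fin d) (Fin d) ℝ} : frob A A = 0 ↔ A = 0 := by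
  refine ⟨fun h => ?_, by rintro rfl; simp [frob]⟩
  ext m n
  have hrow := (Finset.sum_eq_zero_iff_of_nonneg fun m _ =>
    Finset.sum_nonneg fun n _ => mul_self_nonneg (A m n)).1 h m (Finset.mem_univ _)
  exact mul_self_eq_zero.1 <| (Finset.sum_eq_zero_iff_of_nonneg fun n _ =>
    mul_self_nonneg (A m n)).1 hrow n (Finset.mem_univ _)

lemma integral_frob_sum_smul {X : Type*} [MeasurableSpace X] (μ : Measure X) {ι : Type*}
    [Fintype ι] (c : ι → ℝ) {A : ι → X → Matrix (Fin d) (Fin d) ℝ}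
    (hA : ∀ p r, Integrable (fun x => frob (A p x) (A r x)) μ) :
    ∫ x, frob (∑ p, c p • A p x) (∑ r, c r • A r x) ∂μ
      = ∑ p, ∑ r, c p * c r * ∫ x, frob (A p x) (A r x) ∂μ := by
  simp only [frob_sum_smul]
  rw [integral_finsetSum _ fun p _ => integrable_finsetSum _ fun r _ => (hA p r).const_mul _]
  refine Finset.sum_congr rfl fun p _ => ?_
  rw [integral_finsetSum _ fun r _ => (hA p r).const_mul _]
  simp only [integral_const_mul]

lemma apply_eq_sum_smul_apply_single {F : Type*} [NormedAddCommGroup F] [NormedSpace ℝ F]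
    (L : EuclideanSpace ℝ (Fin d) →L[ℝ] F) (e : EuclideanSpace ℝ (Fin d)) :
    L e = ∑ n, e n • L (EuclideanSpace.single n 1) := by
  conv_lhs => rw [← (EuclideanSpace.basisFun (Fin d) ℝ).sum_repr e]
  simp

lemma inner_fderiv_eq_sum_symGrad (u : EuclideanSpace ℝ (Fin d) → EuclideanSpace ℝ (Fin d))
    (x e : EuclideanSpace ℝ (Fin d)) :
    inner ℝ e (fderiv ℝ u x e) = ∑ m, ∑ n, e m * e n * symGrad u x m n := by
  have hswap : ∑ m, ∑ n, e m * e n * fderiv ℝ u x (EuclideanSpace.single m 1) n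
      = ∑ m, ∑ n, e m * e n * fderiv ℝ u x (EuclideanSpace.single n 1) m := by
    rw [Finset.sum_comm]; simp only [mul_comm]
  calc inner ℝ e (fderiv ℝ u x e)
      = ∑ m, ∑ n, e m * e n * fderiv ℝ u x (EuclideanSpace.single n 1) m := by
        rw [apply_eq_sum_smul_apply_single _ e]
        simp [PiLp.inner_apply, Finset.mul_sum, mul_comm, mul_assoc]
    _ = ∑ m, ∑ n, e m * e n * symGrad u x m n := by
        simp only [symGrad, mul_div_assoc', mul_add, ← Finset.sum_div, Finset.sum_add_distrib,
          hswap]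
        ring

lemma exists_sum_symGrad_eq_zero {u : EuclideanSpace ℝ (Fin d) → EuclideanSpace ℝ (Fin d)}
    (hu : Differentiable ℝ u) {e : EuclideanSpace ℝ (Fin d)} (he : u e = u 0) :
    ∃ t ∈ Set.Ioo (0 : ℝ) 1, ∑ m, ∑ n, e m * e n * symGrad u (t • e) m n = 0 := by
  have hderiv : ∀ t : ℝ, HasDerivAt (fun s : ℝ => inner ℝ e (u (s • e)))
      (inner ℝ e (fderiv ℝ u (t • e) e)) t := fun t =>
    (innerSL ℝ e).hasFDerivAt.comp_hasDerivAt t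
      ((hu _).hasFDerivAt.comp_hasDerivAt t
        ((hasDerivAt_id t).smul_const e |>.congr_deriv (one_smul ℝ e)))
  obtain ⟨t, ht, h0⟩ := exists_hasDerivAt_eq_zero zero_lt_one
    (HasDerivAt.continuousOn fun t _ => hderiv t) (by simp [he]) fun t _ => hderiv t
  exact ⟨t, ht, by rwa [← inner_fderiv_eq_sum_symGrad]⟩

lemma eq_zero_of_periodic_of_symGrad_eq
    {u : EuclideanSpace ℝ (Fin d) → EuclideanSpace ℝ (Fin d)}
    (hu : ContDiff ℝ 1 u) (hper : ∀ y l, u (y + EuclideanSpace.single l 1) = u y)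
    {S : Matrix (Fin d) (Fin d) ℝ} (hS : ∀ y ∈ unitCell d, symGrad u y = S) : S = 0 := by
  have hS' : ∀ y : EuclideanSpace ℝ (Fin d), (∀ i, y i ∈ Set.Icc 0 1) → symGrad u y = S := by
    intro y hy
    refine Set.EqOn.closure hS (continuous_symGrad hu) continuous_const ?_
    rwa [closure_unitCell]
  have hquad : ∀ e : EuclideanSpace ℝ (Fin d), (∀ i, e i = 0 ∨ e i = 1) → u e = u 0 →
      ∑ m, ∑ n, e m * e n * S m n = 0 := by
    intro e he hue
    obtain ⟨t, ht, h0⟩ := exists_sum_symGrad_eq_zero (hu.differentiable one_ne_zero) hue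
    rwa [hS' _ fun i => ?_] at h0
    rcases he i with h | h <;> simp [h, ht.1.le, ht.2.le]
  have hsingle : ∀ a, u (EuclideanSpace.single a 1) = u 0 := fun a => by
    simpa using hper 0 a
  have hdiag : ∀ a, S a a = 0 := fun a => by
    simpa [PiLp.single_apply] using
      hquad _ (fun i => by simp [PiLp.single_apply]; tauto) (hsingle a)
  have hsymm : S.IsSymm := hS' 0 (fun _ => by simp) ▸ isSymm_symGrad u 0
  ext a b
  by_cases hab : a = b
  · subst hab; exact hdiag a
  · have h := hquad (EuclideanSpace.single a 1 + EuclideanSpace.single b 1)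
      (fun i => by by_cases hia : i = a <;> by_cases hib : i = b <;> simp_all)
      (by rw [hper, hsingle])
    simp only [PiLp.add_apply, PiLp.single_apply, mul_add, mul_ite, mul_one, mul_zero, add_mul,
      ite_mul, one_mul, zero_mul, sum_add_distrib, sum_ite_eq', mem_univ, ↓reduceIte] at h
    rw [hdiag, hdiag, hsymm.apply a b] at h
    rw [Matrix.zero_apply]; linarith

lemma eqOn_zero_of_setIntegral_eq_zero {X : Type*} [TopologicalSpace X] [MeasurableSpace X]
    {μ : Measure X} [μ.IsOpenPosMeasure] {U : Set X} (hU : IsOpen U) {f : X → ℝ}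
    (hf : Continuous f) (hnn : ∀ x, 0 ≤ f x) (hint : IntegrableOn f U μ)
    (h0 : ∫ x in U, f x ∂μ = 0) : Set.EqOn f 0 U :=
  Measure.eqOn_open_of_ae_eq ((setIntegral_eq_zero_iff_of_nonneg_ae (ae_of_all _ hnn) hint).1 h0)
    hU hf.continuousOn continuousOn_const

lemma exists_pos_mul_sq_le_of_biquadratic {E F : Type*} [NormedAddCommGroup E] [NormedSpace ℝ E]
    [ProperSpace E] [NormedAddCommGroup F] [NormedSpace ℝ F] [ProperSpace F] {f : E → F → ℝ}
    (hf : Continuous fun p : E × F => f p.1 p.2)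
    (hhom : ∀ (a b : ℝ) x y, f (a • x) (b • y) = a ^ 2 * b ^ 2 * f x y)
    (hpos : ∀ x y, x ≠ 0 → y ≠ 0 → 0 < f x y) :
    ∃ lam : ℝ, 0 < lam ∧ ∀ x y, lam * ‖x‖ ^ 2 * ‖y‖ ^ 2 ≤ f x y := by
  obtain ⟨lam, hlam, hmin⟩ :=
    ((isCompact_sphere (0 : E) 1).prod (isCompact_sphere (0 : F) 1)).exists_forall_le'
      hf.continuousOn (a := 0) fun p hp =>
        hpos _ _ (ne_zero_of_mem_unit_sphere ⟨p.1, hp.1⟩) (ne_zero_of_mem_unit_sphere ⟨p.2, hp.2⟩)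
  refine ⟨lam, hlam, fun x y => ?_⟩
  rcases eq_or_ne x 0 with rfl | hx
  · simpa using (hhom 0 1 0 y).symm.le
  rcases eq_or_ne y 0 with rfl | hy
  · simpa using (hhom 1 0 x 0).symm.le
  have hx' : ‖x‖ ≠ 0 := norm_ne_zero_iff.2 hx
  have hy' : ‖y‖ ≠ 0 := norm_ne_zero_iff.2 hy
  have hunit := hmin (‖x‖⁻¹ • x, ‖y‖⁻¹ • y) ⟨by simp [norm_smul, hx], by simp [norm_smul, hy]⟩
  calc lam * ‖x‖ ^ 2 * ‖y‖ ^ 2 ≤ ‖x‖ ^ 2 * ‖y‖ ^ 2 * f (‖x‖⁻¹ • x) (‖y‖⁻¹ • y) := by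
        nlinarith [mul_nonneg (sq_nonneg ‖x‖) (sq_nonneg ‖y‖)]
    _ = f (‖x‖ • ‖x‖⁻¹ • x) (‖y‖ • ‖y‖⁻¹ • y) := (hhom _ _ _ _).symm
    _ = f x y := by rw [smul_inv_smul₀ hx', smul_inv_smul₀ hy']

def biquadraticForm (N : Fin d → Fin d → Fin d → Fin d → ℝ) (ζ η : EuclideanSpace ℝ (Fin d)) :
    ℝ :=
  ∑ i, ∑ j, ∑ m, ∑ n, N i j m n * ζ i * ζ m * η j * η n

lemma continuous_biquadraticForm (N : Fin d → Fin d → Fin d → Fin d → ℝ) :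
    Continuous fun p : EuclideanSpace ℝ (Fin d) × EuclideanSpace ℝ (Fin d) =>
      biquadraticForm N p.1 p.2 := by
  unfold biquadraticForm; fun_prop

lemma biquadraticForm_smul_smul (N : Fin d → Fin d → Fin d → Fin d → ℝ) (a b : ℝ)
    (ζ η : EuclideanSpace ℝ (Fin d)) :
    biquadraticForm N (a • ζ) (b • η) = a ^ 2 * b ^ 2 * biquadraticForm N ζ η := by
  simp only [biquadraticForm, PiLp.smul_apply, smul_eq_mul, Finset.mul_sum]
  refine Finset.sum_congr rfl fun i _ => Finset.sum_congr rfl fun j _ =>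
    Finset.sum_congr rfl fun m _ => Finset.sum_congr rfl fun n _ => by ring

def cellStrain (χ : Fin d → Fin d → EuclideanSpace ℝ (Fin d) → EuclideanSpace ℝ (Fin d))
    (i j : Fin d) : EuclideanSpace ℝ (Fin d) → Matrix (Fin d) (Fin d) ℝ :=
  symGrad fun z => Pfield i j z - χ i j z

section CellProblem

variable {χ : Fin d → Fin d → EuclideanSpace ℝ (Fin d) → EuclideanSpace ℝ (Fin d)}
  {N : Fin d → Fin d → Fin d → Fin d → ℝ}

lemma cellStrain_eq (hχ : ∀ i j, ContDiff ℝ 1 (χ i j)) (i j : Fin d)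
    (y : EuclideanSpace ℝ (Fin d)) :
    cellStrain χ i j y = symGrad (Pfield i j) y - symGrad (χ i j) y := by
  have hP : DifferentiableAt ℝ (Pfield i j) y := by
    rw [Pfield_eq_smulRight]; exact ContinuousLinearMap.differentiableAt _
  exact symGrad_sub hP ((hχ i j).differentiable one_ne_zero y)

lemma continuous_cellStrain (hχ : ∀ i j, ContDiff ℝ 1 (χ i j)) (i j : Fin d) :
    Continuous (cellStrain χ i j) := by
  refine continuous_symGrad (ContDiff.sub ?_ (hχ i j))
  rw [Pfield_eq_smulRight]; exact ContinuousLinearMap.contDiff _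

lemma integral_cellStrain_eq_integral_frob (hχ : ∀ i j, ContDiff ℝ 1 (χ i j))
    (hcell : ∀ i j m n : Fin d,
      ∫ y in unitCell d, frob (cellStrain χ i j y) (symGrad (χ m n) y) = 0) (i j m n : Fin d) :
    ∫ y in unitCell d, cellStrain χ i j y m n
      = ∫ y in unitCell d, frob (cellStrain χ i j y) (cellStrain χ m n y) := by
  have hsplit : ∀ y, cellStrain χ i j y m n = frob (cellStrain χ i j y) (cellStrain χ m n y)
      + frob (cellStrain χ i j y) (symGrad (χ m n) y) := by
    intro y
    rw [← frob_add_right, cellStrain_eq hχ m n, sub_add_cancel,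
      frob_symGrad_Pfield (A := cellStrain χ i j y) (isSymm_symGrad _ _)]
  have hG := continuous_cellStrain hχ
  have hH := continuous_symGrad (hχ m n)
  simp only [hsplit]
  rw [integral_add (integrableOn_unitCell (by fun_prop)) (integrableOn_unitCell (by fun_prop)),
    hcell, add_zero]

lemma biquadraticForm_eq_integral_frob_self (hχ : ∀ i j, ContDiff ℝ 1 (χ i j))
    (hN : ∀ i j m n, N i j m n
      = ∫ y in unitCell d, frob (cellStrain χ i j y) (cellStrain χ m n y))
    (ζ η : EuclideanSpace ℝ (Fin d)) :
    biquadraticForm N ζ η = ∫ y in unitCell d,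
      frob (∑ p : Fin d × Fin d, (ζ p.1 * η p.2) • cellStrain χ p.1 p.2 y)
        (∑ r : Fin d × Fin d, (ζ r.1 * η r.2) • cellStrain χ r.1 r.2 y) := by
  rw [integral_frob_sum_smul _ _ fun p r => integrableOn_unitCell
    ((continuous_cellStrain hχ _ _).frob (continuous_cellStrain hχ _ _))]
  simp only [← hN, biquadraticForm, Fintype.sum_prod_type]
  refine Finset.sum_congr rfl fun i _ => Finset.sum_congr rfl fun j _ =>
    Finset.sum_congr rfl fun m _ => Finset.sum_congr rfl fun n _ => by ring

lemma biquadraticForm_pos (hχ : ∀ i j, ContDiff ℝ 1 (χ i j))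
    (hper : ∀ i j y l, χ i j (y + EuclideanSpace.single l 1) = χ i j y)
    (hN : ∀ i j m n, N i j m n
      = ∫ y in unitCell d, frob (cellStrain χ i j y) (cellStrain χ m n y))
    {ζ η : EuclideanSpace ℝ (Fin d)} (hζ : ζ ≠ 0) (hη : η ≠ 0) : 0 < biquadraticForm N ζ η := by
  set M := fun y => ∑ p : Fin d × Fin d, (ζ p.1 * η p.2) • cellStrain χ p.1 p.2 y
  set u := fun z => ∑ p : Fin d × Fin d, (ζ p.1 * η p.2) • χ p.1 p.2 z
  have hM : ∀ y, M y = (Matrix.of fun m n => (ζ m * η n + ζ n * η m) / 2) - symGrad u y := by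
    intro y
    rw [symGrad_sum_smul _ _ fun p _ => (hχ p.1 p.2).differentiable one_ne_zero y]
    simp only [M, cellStrain_eq hχ, smul_sub, Finset.sum_sub_distrib, sum_smul_symGrad_Pfield]
  have hMcont : Continuous M := by
    have := continuous_cellStrain hχ; fun_prop
  rw [biquadraticForm_eq_integral_frob_self hχ hN]
  refine (setIntegral_nonneg isOpen_unitCell.measurableSet fun y _ => frob_self_nonneg _).lt_of_ne
    fun h0 => symOuter_ne_zero hζ hη ?_
  have hM0 := eqOn_zero_of_setIntegral_eq_zero isOpen_unitCell (hMcont.frob hMcont)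
    (fun y => frob_self_nonneg (M y)) (integrableOn_unitCell (hMcont.frob hMcont)) h0.symm
  refine eq_zero_of_periodic_of_symGrad_eq (u := u)
    (ContDiff.sum fun p _ => (hχ p.1 p.2).const_smul _) (fun y l => by simp only [u, hper])
    fun y hy => ?_
  exact (sub_eq_zero.1 ((hM y).symm.trans (frob_self_eq_zero.1 (hM0 hy)))).symm

end CellProblem

theorem effective_viscosity_legendre_hadamard_general
    (d : ℕ)
    (Y : Set (EuclideanSpace ℝ (Fin d)))
    (hY : Y = {y : EuclideanSpace ℝ (Fin d) | ∀ i, y i ∈ Set.Ioo (0 : ℝ) 1})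
    (χ : Fin d → Fin d → EuclideanSpace ℝ (Fin d) → EuclideanSpace ℝ (Fin d))
    (hχC1 : ∀ i j, ContDiff ℝ 1 (χ i j))
    (hχper : ∀ (i j : Fin d) (y : EuclideanSpace ℝ (Fin d)) (l : Fin d),
      χ i j (y + EuclideanSpace.single l 1) = χ i j y)
    (hcell : ∀ i j m n : Fin d,
      ∫ y in Y, frob (symGrad (fun z => Pfield i j z - χ i j z) y) (symGrad (χ m n) y) = 0)
    (N : Fin d → Fin d → Fin d → Fin d → ℝ)
    (hN : ∀ i j m n : Fin d,
      N i j m n = ∫ y in Y, symGrad (fun z => Pfield i j z - χ i j z) y m n) :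
    ∃ lam : ℝ, 0 < lam ∧ ∀ ζ η : EuclideanSpace ℝ (Fin d),
      lam * ‖ζ‖ ^ 2 * ‖η‖ ^ 2 ≤ ∑ i, ∑ j, ∑ m, ∑ n, N i j m n * ζ i * ζ m * η j * η n := by
  subst hY
  have hN' : ∀ i j m n, N i j m n
      = ∫ y in unitCell d, frob (cellStrain χ i j y) (cellStrain χ m n y) := fun i j m n =>
    (hN i j m n).trans (integral_cellStrain_eq_integral_frob hχC1 hcell i j m n)
  exact exists_pos_mul_sq_le_of_biquadratic (continuous_biquadraticForm N)
    (biquadraticForm_smul_smul N) fun ζ η hζ hη => biquadraticForm_pos hχC1 hχper hN' hζ hη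

/-- Under the cell-problem orthogonality hypotheses, the effective viscosity
tensor satisfies the Legendre–Hadamard (strong ellipticity) condition: there exists `λ > 0`
with `Σ N^{ij}_{mn} ζ_i ζ_m η_j η_n ≥ λ |ζ|² |η|²` for all `ζ, η ∈ ℝ^d`. -/
theorem effective_viscosity_legendre_hadamard
    (d : ℕ) (hd : d = 2 ∨ d = 3)
    (Y : Set (EuclideanSpace ℝ (Fin d)))
    (hY : Y = {y : EuclideanSpace ℝ (Fin d) | ∀ i, y i ∈ Set.Ioo (0 : ℝ) 1})
    (χ : Fin d → Fin d → EuclideanSpace ℝ (Fin d) → EuclideanSpace ℝ (Fin d))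
    (hχC1 : ∀ i j, ContDiff ℝ 1 (χ i j))
    (hχper : ∀ (i j : Fin d) (y : EuclideanSpace ℝ (Fin d)) (l : Fin d),
      χ i j (y + EuclideanSpace.single l 1) = χ i j y)
    (hcell : ∀ i j m n : Fin d,
      ∫ y in Y, frob (symGrad (fun z => Pfield i j z - χ i j z) y) (symGrad (χ m n) y) = 0)
    (N : Fin d → Fin d → Fin d → Fin d → ℝ)
    (hN : ∀ i j m n : Fin d,
      N i j m n = ∫ y in Y, symGrad (fun z => Pfield i j z - χ i j z) y m n) :
    ∃ lam : ℝ, 0 < lam ∧ ∀ ζ η : EuclideanSpace ℝ (Fin d),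
      lam * ‖ζ‖ ^ 2 * ‖η‖ ^ 2 ≤ ∑ i, ∑ j, ∑ m, ∑ n, N i j m n * ζ i * ζ m * η j * η n :=
  effective_viscosity_legendre_hadamard_general d Y hY χ hχC1 hχper hcell N hN
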